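/- In U(N₋) with generators X,Y,Z,U,V,W satisfying [X,Y] = -U, [Y,Z] = -V, [X,V] = -W, [U,Z] = -W and all other brackets of generators zero, the element H̃ = (1/2)(X² + Y² + Z²) satisfies: [H̃, W] = 0 and [H̃, UV − YW] = 0. -/

import Mathlib

open Matrix

attribute [local instance 100] LieRing.ofAssociativeRing

noncomputable def E (i j : Fin 4) : Matrix (Fin 4) (Fin 4) ℝ := Matrix.single i j 1

lemma mul_lower {A B : Matrix (Fin 4) (Fin 4) ℝ}
    (hA : ∀ i j : Fin 4, i ≤ j → A i j = 0) (hB : ∀ i j : Fin 4, i ≤ j → B i j = 0) :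
    ∀ i j : Fin 4, i ≤ j → (A * B) i j = 0 := by
  intro i j hij
  rw [Matrix.mul_apply]
  apply Finset.sum_eq_zero
  intro k _
  rcases le_or_gt i k with h | h
  · rw [hA i k h, zero_mul]
  · rw [hB k j (le_trans h.le hij), mul_zero]

/-- The Lie algebra `N₋` of strictly lower triangular 4×4 real matrices. -/
noncomputable def NL : LieSubalgebra ℝ (Matrix (Fin 4) (Fin 4) ℝ) where
  carrier := {A | ∀ i j : Fin 4, i ≤ j → A i j = 0}
  add_mem' := fun hA hB i j hij => by simp [hA i j hij, hB i j hij]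
  zero_mem' := fun i j _ => rfl
  smul_mem' := fun c A hA i j hij => by simp [hA i j hij]
  lie_mem' := fun {A B} hA hB i j hij => by
    show (A * B - B * A) i j = 0
    simp [mul_lower hA hB i j hij, mul_lower hB hA i j hij]

lemma E_mem {a b : Fin 4} (h : b < a) : E a b ∈ NL := by
  intro i j hij
  show Matrix.single a b 1 i j = 0
  by_cases hab : a = i ∧ b = j
  · obtain ⟨h1, h2⟩ := hab; subst h1; subst h2
    exact absurd hij (not_le.mpr h)
  · simp [Matrix.single, Matrix.of_apply, hab]

noncomputable abbrev UN := UniversalEnvelopingAlgebra ℝ NL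
noncomputable def ι : NL →ₗ⁅ℝ⁆ UN := UniversalEnvelopingAlgebra.ι ℝ

/- The generators `X = E21, Y = E32, Z = E43, U = E31, V = E42, W = E41` of `U(N₋)`. -/
noncomputable def uX : UN := ι ⟨E 1 0, E_mem (by decide)⟩
noncomputable def uY : UN := ι ⟨E 2 1, E_mem (by decide)⟩
noncomputable def uZ : UN := ι ⟨E 3 2, E_mem (by decide)⟩
noncomputable def uU : UN := ι ⟨E 2 0, E_mem (by decide)⟩
noncomputable def uV : UN := ι ⟨E 3 1, E_mem (by decide)⟩
noncomputable def uW : UN := ι ⟨E 3 0, E_mem (by decide)⟩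

/-- The quantized subRiemannian Hamiltonian `H̃ = (1/2)(X² + Y² + Z²)` in `U(N₋)`. -/
noncomputable def uH : UN := (1 / 2 : ℝ) • (uX ^ 2 + uY ^ 2 + uZ ^ 2)

/-! In an associative algebra `ad h = ⁅h, ·⁆` is a derivation, and `⁅g², b⁆ = 2 g ⁅g, b⁆` whenever
`g` commutes with `⁅g, b⁆`. This holds for `g ∈ {X, Y, Z}` and `b ∈ {U, V, Y, W}`, so
`⁅H̃, b⁆ = X⁅X, b⁆ + Y⁅Y, b⁆ + Z⁅Z, b⁆`, giving `⁅H̃, W⁆ = 0`, `⁅H̃, U⁆ = ZW`, `⁅H̃, V⁆ = -XW`,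
`⁅H̃, Y⁆ = ZV - XU`. The Leibniz rule then yields
`⁅H̃, UV - YW⁆ = ZWV - UXW - (ZV - XU)W`, which vanishes because `W` is central and `U`, `X` commute. -/

namespace Ring

variable {A : Type*} [Ring A]

theorem lie_mul (a b c : A) : ⁅a, b * c⁆ = ⁅a, b⁆ * c + b * ⁅a, c⁆ := by
  simp only [lie_def]; noncomm_ring

theorem lie_sq_of_commute {a b : A} (h : Commute a ⁅a, b⁆) : ⁅a ^ 2, b⁆ = 2 • (a * ⁅a, b⁆) := by
  have : ⁅a ^ 2, b⁆ = a * ⁅a, b⁆ + ⁅a, b⁆ * a := by simp only [lie_def]; noncomm_ring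
  rw [this, ← h.eq, two_nsmul]

end Ring

theorem lie_ι_ι {a b c : NL} (h : ⁅(a : Matrix (Fin 4) (Fin 4) ℝ), (b : Matrix (Fin 4) (Fin 4) ℝ)⁆ = c) :
    ⁅ι a, ι b⁆ = ι c := by
  rw [← LieHom.map_lie, show ⁅a, b⁆ = c from Subtype.ext h]

theorem lie_ι_ι_eq_zero {a b : NL}
    (h : ⁅(a : Matrix (Fin 4) (Fin 4) ℝ), (b : Matrix (Fin 4) (Fin 4) ℝ)⁆ = 0) : ⁅ι a, ι b⁆ = 0 :=
  (lie_ι_ι (c := 0) h).trans (map_zero ι)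

theorem lie_ι_ι_eq_neg {a b c : NL}
    (h : ⁅(a : Matrix (Fin 4) (Fin 4) ℝ), (b : Matrix (Fin 4) (Fin 4) ℝ)⁆ = -c) :
    ⁅ι a, ι b⁆ = -ι c :=
  (lie_ι_ι (c := -c) h).trans (map_neg ι c)

theorem lie_uX_uY : ⁅uX, uY⁆ = -uU := lie_ι_ι_eq_neg (by simp [E, Ring.lie_def])
theorem lie_uZ_uY : ⁅uZ, uY⁆ = uV := lie_ι_ι (by simp [E, Ring.lie_def])
theorem lie_uX_uV : ⁅uX, uV⁆ = -uW := lie_ι_ι_eq_neg (by simp [E, Ring.lie_def])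
theorem lie_uZ_uU : ⁅uZ, uU⁆ = uW := lie_ι_ι (by simp [E, Ring.lie_def])

theorem lie_uX_uU : ⁅uX, uU⁆ = 0 := lie_ι_ι_eq_zero (by simp [E, Ring.lie_def])
theorem lie_uY_uU : ⁅uY, uU⁆ = 0 := lie_ι_ι_eq_zero (by simp [E, Ring.lie_def])
theorem lie_uY_uV : ⁅uY, uV⁆ = 0 := lie_ι_ι_eq_zero (by simp [E, Ring.lie_def])
theorem lie_uZ_uV : ⁅uZ, uV⁆ = 0 := lie_ι_ι_eq_zero (by simp [E, Ring.lie_def])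
theorem lie_uV_uW : ⁅uV, uW⁆ = 0 := lie_ι_ι_eq_zero (by simp [E, Ring.lie_def])
theorem lie_uX_uW : ⁅uX, uW⁆ = 0 := lie_ι_ι_eq_zero (by simp [E, Ring.lie_def])
theorem lie_uY_uW : ⁅uY, uW⁆ = 0 := lie_ι_ι_eq_zero (by simp [E, Ring.lie_def])
theorem lie_uZ_uW : ⁅uZ, uW⁆ = 0 := lie_ι_ι_eq_zero (by simp [E, Ring.lie_def])

theorem lie_uH_of_commute {b : UN} (hX : Commute uX ⁅uX, b⁆) (hY : Commute uY ⁅uY, b⁆)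
    (hZ : Commute uZ ⁅uZ, b⁆) : ⁅uH, b⁆ = uX * ⁅uX, b⁆ + uY * ⁅uY, b⁆ + uZ * ⁅uZ, b⁆ := by
  rw [uH, smul_lie, add_lie, add_lie, Ring.lie_sq_of_commute hX, Ring.lie_sq_of_commute hY,
    Ring.lie_sq_of_commute hZ]
  module

theorem lie_uH_uW : ⁅uH, uW⁆ = 0 := by
  rw [lie_uH_of_commute] <;> simp [lie_uX_uW, lie_uY_uW, lie_uZ_uW]

theorem lie_uH_uU : ⁅uH, uU⁆ = uZ * uW := by
  rw [lie_uH_of_commute] <;> simp [lie_uX_uU, lie_uY_uU, lie_uZ_uU, commute_iff_lie_eq, lie_uZ_uW]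

theorem lie_uH_uV : ⁅uH, uV⁆ = -(uX * uW) := by
  rw [lie_uH_of_commute] <;> simp [lie_uX_uV, lie_uY_uV, lie_uZ_uV, commute_iff_lie_eq, lie_uX_uW]

theorem lie_uH_uY : ⁅uH, uY⁆ = uZ * uV - uX * uU := by
  rw [lie_uH_of_commute] <;> simp [lie_uX_uY, lie_uZ_uY, commute_iff_lie_eq, lie_uX_uU, lie_uZ_uV]
  abel

theorem lie_uH_uU_mul_uV_sub_uY_mul_uW : ⁅uH, uU * uV - uY * uW⁆ = 0 := by
  have hUX : uU * uX = uX * uU := (commute_iff_lie_eq.mpr lie_uX_uU).eq.symm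
  have hWV : uW * uV = uV * uW := (commute_iff_lie_eq.mpr lie_uV_uW).eq.symm
  rw [lie_sub, Ring.lie_mul, Ring.lie_mul, lie_uH_uU, lie_uH_uV, lie_uH_uY, lie_uH_uW, mul_assoc,
    hWV, mul_neg, ← mul_assoc uU, hUX]
  noncomm_ring

/-- In `U(N₋)` (generators `X,Y,Z,U,V,W` with `[X,Y] = -U`, `[Y,Z] = -V`,
`[X,V] = [U,Z] = -W`, other generator brackets zero), the quantized Hamiltonian
`H̃ = (1/2)(X² + Y² + Z²)` satisfies `[H̃, W] = 0` and `[H̃, UV − YW] = 0`. -/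
theorem stmt15 :
    uH * uW - uW * uH = 0 ∧
    uH * (uU * uV - uY * uW) - (uU * uV - uY * uW) * uH = 0 :=
  ⟨lie_uH_uW, lie_uH_uU_mul_uV_sub_uY_mul_uW⟩
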